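/- The map p: V → ℝ defined by p(x1,x2,x3,x4,x5,x,y) = (x2·x5 − x3·x4)/(x4² + x5²) on V = ℝ^3 × (ℝ² \ {(0,0)}) × ℝ² is a smooth submersion (its differential is surjective at every point of V), and every fiber p^{-1}(c) is nonempty and path-connected. -/

import Mathlib

open Real

/-- The map `p(x1,...,x5,x,y) = (x2 x5 - x3 x4)/(x4² + x5²)` on
`V = {x4² + x5² ≠ 0} ⊂ ℝ^7`. -/
noncomputable def p14 (v : Fin 7 → ℝ) : ℝ :=
  (v 1 * v 4 - v 2 * v 3) / (v 3 ^ 2 + v 4 ^ 2)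

lemma isPathConnected_prod {α β : Type*} [TopologicalSpace α] [TopologicalSpace β]
    {s : Set α} {t : Set β} (hs : IsPathConnected s) (ht : IsPathConnected t) :
    IsPathConnected (s ×ˢ t) := by
  obtain ⟨x, hx, hxs⟩ := hs
  obtain ⟨y, hy, hyt⟩ := ht
  refine ⟨(x, y), ⟨hx, hy⟩, ?_⟩
  rintro ⟨a, b⟩ ⟨ha, hb⟩
  obtain ⟨γ₁, hγ₁⟩ := hxs ha
  obtain ⟨γ₂, hγ₂⟩ := hyt hb
  exact ⟨γ₁.prod γ₂, fun u => ⟨hγ₁ u, hγ₂ u⟩⟩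

/-- Parametrization of the fiber `p14⁻¹ c`. -/
noncomputable def fibParam (c : ℝ) (q : (Fin 7 → ℝ) × (ℝ × ℝ)) : Fin 7 → ℝ := fun i =>
  if i = 1 then c * q.2.2 + q.1 1 * q.2.1
  else if i = 2 then -c * q.2.1 + q.1 1 * q.2.2
  else if i = 3 then q.2.1
  else if i = 4 then q.2.2
  else q.1 i

/-- `p14` is a smooth submersion on `V = {x4² + x5² ≠ 0}` with nonempty
path-connected fibers. -/
theorem p14_submersion_connected_fibers :
    (ContDiffOn ℝ (⊤ : ℕ∞) p14 {v : Fin 7 → ℝ | v 3 ^ 2 + v 4 ^ 2 ≠ 0}) ∧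
    (∀ v ∈ {v : Fin 7 → ℝ | v 3 ^ 2 + v 4 ^ 2 ≠ 0},
      ∃ L : (Fin 7 → ℝ) →L[ℝ] ℝ, HasFDerivAt p14 L v ∧ Function.Surjective L) ∧
    (∀ c : ℝ,
      ({v : Fin 7 → ℝ | v 3 ^ 2 + v 4 ^ 2 ≠ 0} ∩ p14 ⁻¹' {c}).Nonempty ∧
      IsPathConnected ({v : Fin 7 → ℝ | v 3 ^ 2 + v 4 ^ 2 ≠ 0} ∩ p14 ⁻¹' {c})) := by
  have hcd : ∀ i : Fin 7, ContDiff ℝ (⊤ : ℕ∞) (fun v : Fin 7 → ℝ => v i) := fun i =>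
    (ContinuousLinearMap.proj i : (Fin 7 → ℝ) →L[ℝ] ℝ).contDiff
  refine ⟨?_, ?_, ?_⟩
  · -- smoothness
    unfold p14
    exact ContDiffOn.div
      ((((hcd 1).mul (hcd 4)).sub ((hcd 2).mul (hcd 3))).contDiffOn)
      ((((hcd 3).pow 2).add ((hcd 4).pow 2)).contDiffOn)
      (fun v hv => hv)
  · -- submersion
    intro v hv
    have hD : v 3 ^ 2 + v 4 ^ 2 ≠ 0 := hv
    have hdiff : DifferentiableAt ℝ p14 v := by
      unfold p14
      have hn : ContDiffAt ℝ (⊤ : ℕ∞) (fun w : Fin 7 → ℝ => w 1 * w 4 - w 2 * w 3) v :=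
        (((hcd 1).contDiffAt).mul ((hcd 4).contDiffAt)).sub
          (((hcd 2).contDiffAt).mul ((hcd 3).contDiffAt))
      have hd : ContDiffAt ℝ (⊤ : ℕ∞) (fun w : Fin 7 → ℝ => w 3 ^ 2 + w 4 ^ 2) v :=
        (((hcd 3).contDiffAt).pow 2).add (((hcd 4).contDiffAt).pow 2)
      show DifferentiableAt ℝ
        (fun w : Fin 7 → ℝ => (w 1 * w 4 - w 2 * w 3) / (w 3 ^ 2 + w 4 ^ 2)) v
      exact (hn.div hd hD).differentiableAt (by simp)
    refine ⟨fderiv ℝ p14 v, hdiff.hasFDerivAt, ?_⟩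
    have hdir : ∀ w : Fin 7 → ℝ,
        HasDerivAt (fun t : ℝ => p14 (v + t • w)) (fderiv ℝ p14 v w) 0 := by
      intro w
      have hline : HasDerivAt (fun t : ℝ => v + t • w) w 0 := by
        simpa using ((hasDerivAt_id (0 : ℝ)).smul_const w).const_add v
      have hF : HasFDerivAt p14 (fderiv ℝ p14 v) ((fun t : ℝ => v + t • w) 0) := by
        simpa using hdiff.hasFDerivAt
      exact hF.comp_hasDerivAt 0 hline
    have e1 : fderiv ℝ p14 v ((Pi.single 1 1 : Fin 7 → ℝ)) = v 4 / (v 3 ^ 2 + v 4 ^ 2) := by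
      have hd2 : HasDerivAt
          (fun t : ℝ => ((v 1 + t) * v 4 - v 2 * v 3) / (v 3 ^ 2 + v 4 ^ 2))
          (v 4 / (v 3 ^ 2 + v 4 ^ 2)) 0 := by
        simpa using ((((hasDerivAt_id (0 : ℝ)).const_add (v 1)).mul_const
          (v 4)).sub_const (v 2 * v 3)).div_const (v 3 ^ 2 + v 4 ^ 2)
      have heq : (fun t : ℝ => p14 (v + t • (Pi.single 1 1 : Fin 7 → ℝ))) =
          fun t : ℝ => ((v 1 + t) * v 4 - v 2 * v 3) / (v 3 ^ 2 + v 4 ^ 2) := by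
        funext t
        simp [p14, Pi.single_apply]
      exact (heq ▸ hdir ((Pi.single 1 1 : Fin 7 → ℝ))).unique hd2
    have e2 : fderiv ℝ p14 v ((Pi.single 2 1 : Fin 7 → ℝ)) = -(v 3) / (v 3 ^ 2 + v 4 ^ 2) := by
      have hd2 : HasDerivAt
          (fun t : ℝ => (v 1 * v 4 - (v 2 + t) * v 3) / (v 3 ^ 2 + v 4 ^ 2))
          (-(v 3) / (v 3 ^ 2 + v 4 ^ 2)) 0 := by
        simpa using (((((hasDerivAt_id (0 : ℝ)).const_add (v 2)).mul_const
          (v 3)).const_sub (v 1 * v 4)).div_const (v 3 ^ 2 + v 4 ^ 2))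
      have heq : (fun t : ℝ => p14 (v + t • (Pi.single 2 1 : Fin 7 → ℝ))) =
          fun t : ℝ => (v 1 * v 4 - (v 2 + t) * v 3) / (v 3 ^ 2 + v 4 ^ 2) := by
        funext t
        simp [p14, Pi.single_apply]
      exact (heq ▸ hdir ((Pi.single 2 1 : Fin 7 → ℝ))).unique hd2
    have h34 : v 3 ≠ 0 ∨ v 4 ≠ 0 := by
      by_contra h
      push_neg at h
      exact hD (by rw [h.1, h.2]; ring)
    intro y
    rcases h34 with h3 | h4
    · refine ⟨(-(y) * (v 3 ^ 2 + v 4 ^ 2) / v 3) • (Pi.single 2 1 : Fin 7 → ℝ), ?_⟩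
      rw [map_smul, e2, smul_eq_mul]
      field_simp
    · refine ⟨(y * (v 3 ^ 2 + v 4 ^ 2) / v 4) • (Pi.single 1 1 : Fin 7 → ℝ), ?_⟩
      rw [map_smul, e1, smul_eq_mul]
      field_simp
  · -- fibers
    intro c
    have hsum : ∀ q : (Fin 7 → ℝ) × (ℝ × ℝ), q.2 ≠ 0 →
        fibParam c q ∈ {v : Fin 7 → ℝ | v 3 ^ 2 + v 4 ^ 2 ≠ 0} ∩ p14 ⁻¹' {c} := by
      rintro ⟨u, a, b⟩ hq
      have hab : a ^ 2 + b ^ 2 ≠ 0 := by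
        intro h
        apply hq
        have ha : a = 0 := by nlinarith [sq_nonneg a, sq_nonneg b]
        have hb : b = 0 := by nlinarith [sq_nonneg a, sq_nonneg b]
        simp [Prod.ext_iff, ha, hb]
      constructor
      · simpa [fibParam] using hab
      · simp only [Set.mem_preimage, Set.mem_singleton_iff]
        simp [p14, fibParam]
        rw [div_eq_iff hab]
        ring
    have himg : {v : Fin 7 → ℝ | v 3 ^ 2 + v 4 ^ 2 ≠ 0} ∩ p14 ⁻¹' {c} =
        fibParam c '' (Set.univ ×ˢ {q : ℝ × ℝ | q ≠ 0}) := by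
      apply Set.Subset.antisymm
      · rintro v ⟨hv1, hv2⟩
        have hD : v 3 ^ 2 + v 4 ^ 2 ≠ 0 := hv1
        simp only [Set.mem_preimage, Set.mem_singleton_iff, p14] at hv2
        have hnum : v 1 * v 4 - v 2 * v 3 = c * (v 3 ^ 2 + v 4 ^ 2) := by
          rw [div_eq_iff hD] at hv2; exact hv2
        have hq : ((v 3, v 4) : ℝ × ℝ) ≠ 0 := by
          intro h
          simp [Prod.ext_iff] at h
          exact hD (by rw [h.1, h.2]; ring)
        set t := (v 3 * v 1 + v 4 * v 2) / (v 3 ^ 2 + v 4 ^ 2) with ht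
        have h1 : c * v 4 + t * v 3 = v 1 := by
          rw [ht]
          field_simp
          linear_combination (-(v 4)) * hnum
        have h2 : -c * v 3 + t * v 4 = v 2 := by
          rw [ht]
          field_simp
          linear_combination (v 3) * hnum
        refine ⟨(Function.update v 1 t, (v 3, v 4)), ⟨Set.mem_univ _, hq⟩, ?_⟩
        funext i
        fin_cases i <;>
          simp [fibParam, Function.update] <;> linarith [h1, h2]
      · rintro v ⟨q, ⟨_, hq⟩, rfl⟩
        exact hsum q hq
    constructor
    · refine ⟨fibParam c (0, (0, 1)), hsum (0, (0, 1)) ?_⟩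
      simp [Prod.ext_iff]
    · rw [himg]
      have hpc : IsPathConnected ((Set.univ : Set (Fin 7 → ℝ)) ×ˢ {q : ℝ × ℝ | q ≠ 0}) := by
        apply isPathConnected_prod
        · exact (convex_univ (𝕜 := ℝ)).isPathConnected ⟨0, Set.mem_univ 0⟩
        · have hrank : 1 < Module.rank ℝ (ℝ × ℝ) := by
            rw [rank_prod', Module.rank_self, one_add_one_eq_two]
            exact Cardinal.one_lt_two
          simpa [Set.compl_def] using
            isPathConnected_compl_singleton_of_one_lt_rank hrank (0 : ℝ × ℝ)
      apply hpc.image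
      apply continuous_pi
      intro i
      simp only [fibParam]
      split_ifs <;> fun_prop
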